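/- Let n ≥ 3 be an integer and m ∈ ℝ with m ≠ 0, set f(r) := r² − 2m r^{2−n}, and let I ⊆ (0,∞) be a nonempty open interval on which f > 0. Suppose β : I → ℝ and γ : ℝ → ℝ are twice continuously differentiable and satisfy, for all r ∈ I and all ψ ∈ ℝ, γ(ψ) · ( (f'(r))² − 2 f(r) f''(r) ) + 4 γ''(ψ) = 4 f(r)^{3/2} β''(r). Then γ is constant. (The point is that (f')² − 2 f f'' = 4 n m r^{2−2n}( (n−1) r^{n} − (n−2) m ) is a non-constant function of r on I when m ≠ 0.) -/

import Mathlib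

/-!
Evaluating the equation at radii `r, r₀ ∈ I` and angles `ψ, 0` and taking the alternating sum
eliminates `β` and `γ''`, leaving `(γ ψ - γ 0) (A r - A r₀) = 0` with `A = (f')² - 2 f f''`.
So it suffices that `A` is not constant on `I`: explicitly
`A' = 4n(n-1)(n-2) m r^{1-2n} (2m - rⁿ)`, and `f = r^{2-n} (rⁿ - 2m) > 0` forces `rⁿ > 2m`,
so `A'` does not vanish on `I`.
-/

/-- The radial function `f(r) = r² − 2m r^{2−n}` of the Horowitz–Myers metric. -/
noncomputable def fHM (n : ℕ) (m : ℝ) (r : ℝ) : ℝ :=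
  r ^ 2 - 2 * m * r ^ ((2 : ℝ) - n)

open Real Filter Topology Set

theorem hasDerivAt_fHM (n : ℕ) (m : ℝ) {r : ℝ} (hr : 0 < r) :
    HasDerivAt (fHM n m) (2 * r - 2 * m * (2 - n) * r ^ ((1 : ℝ) - n)) r := by
  have h : HasDerivAt (fun x => x ^ 2 - 2 * m * x ^ ((2 : ℝ) - n))
      (↑2 * r ^ (2 - 1) - 2 * m * ((2 - n) * r ^ ((2 : ℝ) - n - 1))) r :=
    (hasDerivAt_pow 2 r).sub ((hasDerivAt_rpow_const (Or.inl hr.ne')).const_mul (2 * m))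
  refine h.congr_deriv ?_
  rw [show (2 : ℝ) - n - 1 = 1 - n by ring]
  ring

theorem hasDerivAt_deriv_fHM (n : ℕ) (m : ℝ) {r : ℝ} (hr : 0 < r) :
    HasDerivAt (deriv (fHM n m)) (2 - 2 * m * (2 - n) * (1 - n) * r ^ (-(n : ℝ))) r := by
  have h : HasDerivAt (fun x => 2 * x - 2 * m * (2 - n) * x ^ ((1 : ℝ) - n))
      (2 * 1 - 2 * m * (2 - n) * ((1 - n) * r ^ ((1 : ℝ) - n - 1))) r :=
    ((hasDerivAt_id r).const_mul 2).sub
      ((hasDerivAt_rpow_const (Or.inl hr.ne')).const_mul (2 * m * (2 - n)))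
  have hderiv : deriv (fHM n m) =ᶠ[𝓝 r] fun x => 2 * x - 2 * m * (2 - n) * x ^ ((1 : ℝ) - n) :=
    eventually_of_mem (Ioi_mem_nhds hr) fun x hx => (hasDerivAt_fHM n m hx).deriv
  refine (h.congr_deriv ?_).congr_of_eventuallyEq hderiv
  rw [show (1 : ℝ) - n - 1 = -n by ring]
  ring

noncomputable def fHMCoeff (n : ℕ) (m : ℝ) (r : ℝ) : ℝ :=
  deriv (fHM n m) r ^ 2 - 2 * fHM n m r * deriv (deriv (fHM n m)) r

theorem fHMCoeff_eq (n : ℕ) (m : ℝ) {r : ℝ} (hr : 0 < r) :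
    fHMCoeff n m r = 4 * n * m * (n - 1) * r ^ ((2 : ℝ) - n)
        - 4 * n * m ^ 2 * (n - 2) * r ^ ((2 : ℝ) - 2 * n) := by
  have hpow {a b c : ℝ} (h : a + b = c) : r ^ a * r ^ b = r ^ c := by rw [← rpow_add hr, h]
  have h1 : r ^ ((1 : ℝ) - n) * r ^ ((1 : ℝ) - n) = r ^ ((2 : ℝ) - 2 * n) := hpow (by ring)
  have h2 : r * r ^ ((1 : ℝ) - n) = r ^ ((2 : ℝ) - n) := by
    simpa using hpow (a := 1) (b := 1 - n) (by ring)
  have h3 : r ^ 2 * r ^ (-(n : ℝ)) = r ^ ((2 : ℝ) - n) := by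
    simpa [rpow_two] using hpow (a := 2) (b := -n) (by ring)
  have h4 : r ^ ((2 : ℝ) - n) * r ^ (-(n : ℝ)) = r ^ ((2 : ℝ) - 2 * n) := hpow (by ring)
  simp only [fHMCoeff, fHM, (hasDerivAt_fHM n m hr).deriv, (hasDerivAt_deriv_fHM n m hr).deriv]
  linear_combination (4 * m ^ 2 * (2 - n) ^ 2) * h1 - 8 * m * (2 - n) * h2
    + 4 * m * (2 - n) * (1 - n) * h3 - 8 * m ^ 2 * (2 - n) * (1 - n) * h4

theorem HasDerivAt.exists_mem_ne {𝕜 F : Type*} [NontriviallyNormedField 𝕜] [NormedAddCommGroup F]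
    [NormedSpace 𝕜 F] {g : 𝕜 → F} {g' : F} {x : 𝕜} {s : Set 𝕜} (hs : s ∈ 𝓝 x)
    (hg : HasDerivAt g g' x) (hg' : g' ≠ 0) : ∃ y ∈ s, g y ≠ g x :=
  ((show ∀ᶠ y in 𝓝[≠] x, y ∈ s from mem_nhdsWithin_of_mem_nhds hs).and
    (hg.eventually_ne hg')).exists

theorem hasDerivAt_fHMCoeff (n : ℕ) (m : ℝ) {r : ℝ} (hr : 0 < r) :
    HasDerivAt (fHMCoeff n m)
      (4 * n * (n - 1) * (n - 2) * m * r ^ ((1 : ℝ) - 2 * n) * (2 * m - r ^ n)) r := by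
  have h : HasDerivAt (fun x => 4 * n * m * (n - 1) * x ^ ((2 : ℝ) - n)
        - 4 * n * m ^ 2 * (n - 2) * x ^ ((2 : ℝ) - 2 * n))
      (4 * n * m * (n - 1) * ((2 - n) * r ^ ((2 : ℝ) - n - 1))
        - 4 * n * m ^ 2 * (n - 2) * ((2 - 2 * n) * r ^ ((2 : ℝ) - 2 * n - 1))) r :=
    ((hasDerivAt_rpow_const (Or.inl hr.ne')).const_mul _).sub
      ((hasDerivAt_rpow_const (Or.inl hr.ne')).const_mul _)
  have hcoeff : fHMCoeff n m =ᶠ[𝓝 r] fun x => 4 * n * m * (n - 1) * x ^ ((2 : ℝ) - n)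
        - 4 * n * m ^ 2 * (n - 2) * x ^ ((2 : ℝ) - 2 * n) :=
    eventually_of_mem (Ioi_mem_nhds hr) fun x hx => fHMCoeff_eq n m hx
  refine (h.congr_deriv ?_).congr_of_eventuallyEq hcoeff
  have hsplit : r ^ ((2 : ℝ) - n - 1) = r ^ ((1 : ℝ) - 2 * n) * r ^ n := by
    rw [← rpow_natCast, ← rpow_add hr]; ring_nf
  rw [hsplit, show (2 : ℝ) - 2 * n - 1 = 1 - 2 * n by ring]
  ring

theorem two_mul_lt_pow_of_fHM_pos {n : ℕ} {m r : ℝ} (hr : 0 < r) (hf : 0 < fHM n m r) :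
    2 * m < r ^ n := by
  have hsplit : fHM n m r = r ^ ((2 : ℝ) - n) * (r ^ n - 2 * m) := by
    rw [fHM, mul_sub, ← rpow_natCast r n, ← rpow_add hr, sub_add_cancel, rpow_two]
    ring
  rw [hsplit] at hf
  linarith [pos_of_mul_pos_right hf (rpow_pos_of_pos hr _).le]

theorem exists_fHMCoeff_ne {n : ℕ} (hn : 3 ≤ n) {m : ℝ} (hm : m ≠ 0) {I : Set ℝ} (hI : IsOpen I)
    {r₀ : ℝ} (hr₀ : r₀ ∈ I) (hpos : 0 < r₀) (hf : 0 < fHM n m r₀) :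
    ∃ r ∈ I, fHMCoeff n m r ≠ fHMCoeff n m r₀ := by
  refine (hasDerivAt_fHMCoeff n m hpos).exists_mem_ne (hI.mem_nhds hr₀) ?_
  have hn' : (3 : ℝ) ≤ n := by exact_mod_cast hn
  have hrn := two_mul_lt_pow_of_fHM_pos hpos hf
  have hrpow := rpow_pos_of_pos hpos ((1 : ℝ) - 2 * n)
  apply_rules [mul_ne_zero] <;> linarith

theorem eq_of_mul_add_eq {α β K : Type*} [CommRing K] [NoZeroDivisors K] {S : Set α}
    {a c : α → K} {g b : β → K} (h : ∀ x ∈ S, ∀ y, g y * a x + b y = c x) {x₁ x₂ : α}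
    (hx₁ : x₁ ∈ S) (hx₂ : x₂ ∈ S) (ha : a x₁ ≠ a x₂) (y y' : β) : g y = g y' := by
  have : (g y - g y') * (a x₁ - a x₂) = 0 := by
    linear_combination h x₁ hx₁ y - h x₂ hx₂ y - h x₁ hx₁ y' + h x₂ hx₂ y'
  exact sub_eq_zero.1 ((mul_eq_zero.1 this).resolve_right (sub_ne_zero.2 ha))

theorem HM_gamma_constant_general (n : ℕ) (hn : 3 ≤ n) (m : ℝ) (hm : m ≠ 0)
    (I : Set ℝ) (hIopen : IsOpen I) (hIne : I.Nonempty)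
    (hIpos : I ⊆ Set.Ioi (0 : ℝ)) (hfpos : ∀ r ∈ I, 0 < fHM n m r)
    (β γ : ℝ → ℝ)
    (heq : ∀ r ∈ I, ∀ ψ : ℝ,
      γ ψ * ((deriv (fHM n m) r) ^ 2 - 2 * fHM n m r * deriv (deriv (fHM n m)) r)
          + 4 * deriv (deriv γ) ψ
        = 4 * fHM n m r ^ ((3 : ℝ) / 2) * deriv (deriv β) r) :
    ∃ c : ℝ, ∀ ψ : ℝ, γ ψ = c := by
  obtain ⟨r₀, hr₀⟩ := hIne
  obtain ⟨r, hr, hne⟩ := exists_fHMCoeff_ne hn hm hIopen hr₀ (hIpos hr₀) (hfpos r₀ hr₀)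
  exact ⟨γ 0, fun ψ => eq_of_mul_add_eq (a := fHMCoeff n m) heq hr hr₀ hne ψ 0⟩

/-- Rigidity step in the classification of static potentials of the Horowitz–Myers metric with
coordinate mass `m ≠ 0`: if `γ(ψ)((f')² − 2ff'') + 4γ'' = 4 f^{3/2} β''` holds on `I × ℝ`,
then `γ` is constant (since `(f')² − 2ff'' = 4nm r^{2−2n}((n−1)rⁿ − (n−2)m)` is a non-constant
function of `r` when `m ≠ 0`). -/
theorem HM_gamma_constant (n : ℕ) (hn : 3 ≤ n) (m : ℝ) (hm : m ≠ 0)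
    (I : Set ℝ) (hIopen : IsOpen I) (hIconn : IsPreconnected I) (hIne : I.Nonempty)
    (hIpos : I ⊆ Set.Ioi (0 : ℝ)) (hfpos : ∀ r ∈ I, 0 < fHM n m r)
    (β γ : ℝ → ℝ) (hβ : ContDiffOn ℝ 2 β I) (hγ : ContDiff ℝ 2 γ)
    (heq : ∀ r ∈ I, ∀ ψ : ℝ,
      γ ψ * ((deriv (fHM n m) r) ^ 2 - 2 * fHM n m r * deriv (deriv (fHM n m)) r)
          + 4 * deriv (deriv γ) ψ
        = 4 * fHM n m r ^ ((3 : ℝ) / 2) * deriv (deriv β) r) :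
    ∃ c : ℝ, ∀ ψ : ℝ, γ ψ = c :=
  HM_gamma_constant_general n hn m hm I hIopen hIne hIpos hfpos β γ heq
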